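/- Let ρ, x ∈ (0,∞) and let v ∈ ℝ be the unique real number satisfying 8ρ v = 2 log x + ρ^{−1}(x^ρ − x^{−ρ}). Then v is the unique solution of S_ρ(x,v) = 1, and for every r ∈ ℝ, f_ρ(1,r) = f_ρ(x, v + r)/f_ρ(x, v) and g_ρ(1,r) = g_ρ(x, v + r)/g_ρ(x, v). -/
import Mathlib


open Real MeasureTheory Filter Set

noncomputable section

/-- `S` is the (unique) solution of the ODE
`S'(u) = -8ρ S(u)^{1+ρ}/(1+S(u)^ρ)²` with `S(0) = x`, valued in `(0,∞)`. -/
def IsSsol (ρ x : ℝ) (S : ℝ → ℝ) : Prop :=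
  (∀ u : ℝ, 0 < S u) ∧ S 0 = x ∧
    ∀ u : ℝ, HasDerivAt S (-(8 * ρ * S u ^ (1 + ρ)) / (1 + S u ^ ρ) ^ 2) u

/-- `f_ρ(x,·)`, expressed in terms of the solution `S = S_ρ(x,·)`. -/
def fRho (ρ : ℝ) (S : ℝ → ℝ) (r : ℝ) : ℝ :=
  Real.exp (2 * ∫ u in (0:ℝ)..r, (1 - 2 * (1 + (1 - ρ) * S u ^ ρ) / (1 + S u ^ ρ) ^ 2))

/-- `g_ρ(x,·)`, expressed in terms of the solution `S = S_ρ(x,·)`. -/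
def gRho (ρ x : ℝ) (S : ℝ → ℝ) (r : ℝ) : ℝ :=
  x * Real.exp (-2 * ∫ u in (0:ℝ)..r,
      (1 - 2 * ((1 - ρ) * S u ^ ρ + S u ^ (2 * ρ)) / (1 + S u ^ ρ) ^ 2))

/-- Conserved quantity for the separable ODE. -/
def Fc (ρ s : ℝ) : ℝ := 2 * Real.log s + ρ⁻¹ * (s ^ ρ - s ^ (-ρ))

lemma Fc_hasDerivAt (ρ : ℝ) (hρ : 0 < ρ) {s : ℝ} (hs : 0 < s) :
    HasDerivAt (Fc ρ) (2 / s + s ^ (ρ - 1) + s ^ (-ρ - 1)) s := by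
  have h1 : HasDerivAt Real.log s⁻¹ s := Real.hasDerivAt_log hs.ne'
  have h2 : HasDerivAt (fun t : ℝ => t ^ ρ) (ρ * s ^ (ρ - 1)) s :=
    Real.hasDerivAt_rpow_const (Or.inl hs.ne')
  have h3 : HasDerivAt (fun t : ℝ => t ^ (-ρ)) (-ρ * s ^ (-ρ - 1)) s :=
    Real.hasDerivAt_rpow_const (Or.inl hs.ne')
  have h := (h1.const_mul 2).add ((h2.sub h3).const_mul ρ⁻¹)
  have heq : 2 * s⁻¹ + ρ⁻¹ * (ρ * s ^ (ρ - 1) - -ρ * s ^ (-ρ - 1))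
      = 2 / s + s ^ (ρ - 1) + s ^ (-ρ - 1) := by
    field_simp
    ring
  rw [heq] at h
  exact h

lemma Fc_conserved {ρ x : ℝ} (hρ : 0 < ρ) (hx : 0 < x) {S : ℝ → ℝ}
    (hS : IsSsol ρ x S) (u : ℝ) : Fc ρ (S u) = Fc ρ x - 8 * ρ * u := by
  obtain ⟨hpos, hS0, hderiv⟩ := hS
  have key : ∀ u : ℝ, HasDerivAt (fun u => Fc ρ (S u) + 8 * ρ * u) 0 u := by
    intro u
    have h1 := (Fc_hasDerivAt ρ hρ (hpos u)).comp u (hderiv u)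
    have h2 := (hasDerivAt_id u).const_mul (8 * ρ)
    have h := h1.add h2
    have hz : (2 / S u + S u ^ (ρ - 1) + S u ^ (-ρ - 1)) *
        (-(8 * ρ * S u ^ (1 + ρ)) / (1 + S u ^ ρ) ^ 2) + 8 * ρ * 1 = 0 := by
      set s := S u with hsdef
      have hs : 0 < s := hpos u
      have ha : (0:ℝ) < s ^ ρ := Real.rpow_pos_of_pos hs ρ
      have e0 : s ^ (1 + ρ) = s * s ^ ρ := by
        rw [Real.rpow_add hs, Real.rpow_one]
      have e1 : s ^ (ρ - 1) = s ^ ρ / s := by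
        rw [Real.rpow_sub hs, Real.rpow_one]
      have e2 : s ^ (-ρ - 1) = (s ^ ρ * s)⁻¹ := by
        rw [show -ρ - 1 = -(ρ + 1) by ring, Real.rpow_neg hs.le, Real.rpow_add hs,
          Real.rpow_one]
      rw [e0, e1, e2]
      have hd : (1 + s ^ ρ) ^ 2 ≠ 0 := by positivity
      field_simp
      ring
    rw [hz] at h
    exact h
  have hdiff : Differentiable ℝ (fun u => Fc ρ (S u) + 8 * ρ * u) :=
    fun u => (key u).differentiableAt
  have hd0 : ∀ u : ℝ, deriv (fun u => Fc ρ (S u) + 8 * ρ * u) u = 0 :=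
    fun u => (key u).deriv
  have := is_const_of_deriv_eq_zero hdiff hd0 u 0
  simp only [mul_zero, add_zero, hS0] at this
  linarith

lemma Fc_injOn (ρ : ℝ) (hρ : 0 < ρ) : InjOn (Fc ρ) (Ioi 0) := by
  have hmono : StrictMonoOn (Fc ρ) (Ioi 0) := by
    apply strictMonoOn_of_deriv_pos (convex_Ioi 0)
    · intro s hs
      exact (Fc_hasDerivAt ρ hρ hs).continuousAt.continuousWithinAt
    · intro s hs
      rw [interior_Ioi] at hs
      rw [(Fc_hasDerivAt ρ hρ hs).deriv]
      have hs' : (0:ℝ) < s := hs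
      positivity
  exact hmono.injOn

lemma Fc_one (ρ : ℝ) : Fc ρ 1 = 0 := by
  simp [Fc]

theorem stmt10 (ρ x : ℝ) (hρ : 0 < ρ) (hx : 0 < x)
    (v : ℝ) (hv : 8 * ρ * v = 2 * Real.log x + ρ⁻¹ * (x ^ ρ - x ^ (-ρ)))
    (S S1 : ℝ → ℝ) (hS : IsSsol ρ x S) (hS1 : IsSsol ρ 1 S1) :
    S v = 1 ∧ (∀ w : ℝ, S w = 1 → w = v) ∧
    ∀ r : ℝ,
      fRho ρ S1 r = fRho ρ S (v + r) / fRho ρ S v ∧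
      gRho ρ 1 S1 r = gRho ρ x S (v + r) / gRho ρ x S v := by
  have hFx : Fc ρ x = 8 * ρ * v := by rw [Fc]; linarith
  have hinj := Fc_injOn ρ hρ
  have hSpos := hS.1
  have hS1pos := hS1.1
  have hcS : ∀ u : ℝ, Fc ρ (S u) = Fc ρ x - 8 * ρ * u := Fc_conserved hρ hx hS
  have hcS1 : ∀ u : ℝ, Fc ρ (S1 u) = - (8 * ρ * u) := by
    intro u
    rw [Fc_conserved hρ one_pos hS1 u, Fc_one]
    ring
  -- S v = 1
  have hSv : S v = 1 := by
    apply hinj (mem_Ioi.2 (hSpos v)) (mem_Ioi.2 one_pos)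
    rw [hcS v, hFx, Fc_one]; ring
  -- uniqueness
  have huniq : ∀ w : ℝ, S w = 1 → w = v := by
    intro w hw
    have h := hcS w
    rw [hw, Fc_one, hFx] at h
    have h8 : (0:ℝ) < 8 * ρ := by positivity
    have : 8 * ρ * w = 8 * ρ * v := by linarith
    exact mul_left_cancel₀ h8.ne' this
  -- S1 = S(v + ·)
  have hS1eq : ∀ r : ℝ, S1 r = S (v + r) := by
    intro r
    apply hinj (mem_Ioi.2 (hS1pos r)) (mem_Ioi.2 (hSpos (v + r)))
    rw [hcS1 r, hcS (v + r), hFx]; ring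
  refine ⟨hSv, huniq, fun r => ?_⟩
  -- continuity facts
  have hScont : Continuous S := by
    have : Differentiable ℝ S := fun u => (hS.2.2 u).differentiableAt
    exact this.continuous
  have hSρ : Continuous (fun t => S t ^ ρ) := by
    rw [continuous_iff_continuousAt]
    intro t
    exact (Real.continuousAt_rpow_const _ _ (Or.inl (hSpos t).ne')).comp hScont.continuousAt
  have hS2ρ : Continuous (fun t => S t ^ (2 * ρ)) := by
    rw [continuous_iff_continuousAt]
    intro t
    exact (Real.continuousAt_rpow_const _ _ (Or.inl (hSpos t).ne')).comp hScont.continuousAt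
  have hden : ∀ t : ℝ, (1 + S t ^ ρ) ^ 2 ≠ 0 := by
    intro t
    have := Real.rpow_pos_of_pos (hSpos t) ρ
    positivity
  set φ : ℝ → ℝ := fun t => 1 - 2 * (1 + (1 - ρ) * S t ^ ρ) / (1 + S t ^ ρ) ^ 2 with hφdef
  set ψ : ℝ → ℝ :=
    fun t => 1 - 2 * ((1 - ρ) * S t ^ ρ + S t ^ (2 * ρ)) / (1 + S t ^ ρ) ^ 2 with hψdef
  have hdencont : Continuous (fun t => (1 + S t ^ ρ) ^ 2) :=
    (continuous_const.add hSρ).pow 2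
  have hφcont : Continuous φ := by
    rw [hφdef]
    exact continuous_const.sub (Continuous.div
      (continuous_const.mul (continuous_const.add (continuous_const.mul hSρ))) hdencont hden)
  have hψcont : Continuous ψ := by
    rw [hψdef]
    exact continuous_const.sub (Continuous.div
      (continuous_const.mul ((continuous_const.mul hSρ).add hS2ρ)) hdencont hden)
  have hintφ : ∀ a b : ℝ, IntervalIntegrable φ volume a b :=
    fun a b => hφcont.intervalIntegrable a b
  have hintψ : ∀ a b : ℝ, IntervalIntegrable ψ volume a b :=
    fun a b => hψcont.intervalIntegrable a b
  have keyφ : (∫ u in (0:ℝ)..r, φ (v + u))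
      = (∫ u in (0:ℝ)..(v + r), φ u) - ∫ u in (0:ℝ)..v, φ u := by
    rw [intervalIntegral.integral_comp_add_left φ v]
    have := intervalIntegral.integral_add_adjacent_intervals (hintφ 0 v) (hintφ v (v + r))
    simp only [add_zero] at *
    linarith
  have keyψ : (∫ u in (0:ℝ)..r, ψ (v + u))
      = (∫ u in (0:ℝ)..(v + r), ψ u) - ∫ u in (0:ℝ)..v, ψ u := by
    rw [intervalIntegral.integral_comp_add_left ψ v]
    have := intervalIntegral.integral_add_adjacent_intervals (hintψ 0 v) (hintψ v (v + r))
    simp only [add_zero] at *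
    linarith
  have hf1 : (∫ u in (0:ℝ)..r, (1 - 2 * (1 + (1 - ρ) * S1 u ^ ρ) / (1 + S1 u ^ ρ) ^ 2))
      = ∫ u in (0:ℝ)..r, φ (v + u) := by
    refine intervalIntegral.integral_congr fun u _ => ?_
    rw [hS1eq u, hφdef]
  have hg1 : (∫ u in (0:ℝ)..r,
        (1 - 2 * ((1 - ρ) * S1 u ^ ρ + S1 u ^ (2 * ρ)) / (1 + S1 u ^ ρ) ^ 2))
      = ∫ u in (0:ℝ)..r, ψ (v + u) := by
    refine intervalIntegral.integral_congr fun u _ => ?_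
    rw [hS1eq u, hψdef]
  constructor
  · rw [fRho, fRho, fRho, hf1, keyφ, hφdef]
    rw [mul_sub, Real.exp_sub]
  · rw [gRho, gRho, gRho, hg1, keyψ, hψdef, one_mul,
      mul_div_mul_left _ _ hx.ne']
    rw [mul_sub, neg_mul, neg_mul, Real.exp_sub]
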